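/- Let r_1,…,r_{n+1} be iid real-valued random variables, and for α ∈ (0,1) let Q̂ = r_{(⌈(1−α)(n+1)⌉)}, the ⌈(1−α)(n+1)⌉-th order statistic of r_1,…,r_n (interpreted as +∞ if ⌈(1−α)(n+1)⌉ > n). Then P[r_{n+1} ≤ Q̂] ≥ 1−α. Moreover, if the r_i are almost surely distinct, then P[r_{n+1} ≤ Q̂] ≤ 1−α+1/(n+1). -/

import Mathlib

open MeasureTheory ProbabilityTheory
open scoped ENNReal

noncomputable def binCDF (m k : ℕ) (p : ℝ) : ℝ :=
  ∑ i ∈ Finset.range (k + 1), (m.choose i : ℝ) * p ^ i * (1 - p) ^ (m - i)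

noncomputable def betaCDF (a b : ℕ) (x : ℝ) : ℝ :=
  (∫ t in (0:ℝ)..x, t ^ (a - 1) * (1 - t) ^ (b - 1)) /
    (∫ t in (0:ℝ)..1, t ^ (a - 1) * (1 - t) ^ (b - 1))

noncomputable def orderStat {n : ℕ} (x : Fin n → ℝ) (j : Fin n) : ℝ :=
  x (Tuple.sort x j)


/-- `Q̂ = r_{(⌈(1-α)(n+1)⌉)}`, the `⌈(1-α)(n+1)⌉`-th order statistic of `r_1,…,r_n`,
interpreted as `+∞` if `⌈(1-α)(n+1)⌉ > n`. -/
noncomputable def Qhat (n : ℕ) (α : ℝ) (r : Fin n → ℝ) : EReal :=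
  if h : (⌈(1 - α) * (n + 1 : ℝ)⌉).toNat - 1 < n then
    ((orderStat r ⟨(⌈(1 - α) * (n + 1 : ℝ)⌉).toNat - 1, h⟩ : ℝ) : EReal)
  else ⊤

/-! Let `k = ⌈(1 - α)(n + 1)⌉` and let `#{i | r_i < r_j}` be the rank of `r_j` among all `n + 1`
scores. Then `r_{n+1} ≤ Q̂` says exactly that the rank of `r_{n+1}` is below `k`. The joint law
of i.i.d. scores is invariant under permuting coordinates, so every `r_j` has rank below `k` with
the same probability; and for every sample at least `k` indices have rank below `k` (exactly `k`
when the sample has no ties). Summing over `j` gives `(n + 1) P[r_{n+1} ≤ Q̂] ≥ k`, with equality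
for a.s. distinct scores, and `k / (n + 1)` lies between `1 - α` and `1 - α + 1 / (n + 1)`. -/

open Finset Function

section Rank

variable {ι β : Type*} [Fintype ι] [LinearOrder β]

def countLT (x : ι → β) (t : β) : ℕ := #{i | x i < t}

lemma countLT_comp_equiv {κ : Type*} [Fintype κ] (x : ι → β) (e : κ ≃ ι) (t : β) :
    countLT (fun i => x (e i)) t = countLT x t :=
  card_equiv e (by simp)

lemma countLT_le_card (x : ι → β) (t : β) : countLT x t ≤ Fintype.card ι :=
  (card_filter_le _ _).trans_eq card_univ

lemma countLT_castSucc_last {n : ℕ} (x : Fin (n + 1) → β) :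
    countLT (fun i : Fin n => x i.castSucc) (x (Fin.last n)) = countLT x (x (Fin.last n)) := by
  simp only [countLT, card_filter, Fin.sum_univ_castSucc, lt_irrefl, if_false, add_zero]

variable {m : ℕ} {f : Fin m → β}

lemma Monotone.countLT_le_iff (hf : Monotone f) (t : β) (p : Fin m) :
    countLT f t ≤ p ↔ t ≤ f p := by
  constructor
  · contrapose!
    intro hlt
    calc (p : ℕ) < #(Iic p) := by rw [Fin.card_Iic]; omega
      _ ≤ countLT f t := card_le_card fun q hq =>
            mem_filter.2 ⟨mem_univ q, (hf (mem_Iic.1 hq)).trans_lt hlt⟩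
  · intro h
    calc countLT f t ≤ #(Iio p) := card_le_card fun q hq => mem_Iio.2 <| by
            by_contra! hpq
            exact (h.trans (hf hpq)).not_gt (mem_filter.1 hq).2
      _ = p := Fin.card_Iio p

lemma StrictMono.countLT_apply (hf : StrictMono f) (p : Fin m) : countLT f (f p) = p := by
  have : ({q | f q < f p} : Finset (Fin m)) = Iio p := by ext q; simp [hf.lt_iff_lt]
  rw [countLT, this, Fin.card_Iio]

lemma card_countLT_lt_comp_equiv (y : Fin m → β) (e : Fin m ≃ Fin m) (k : ℕ) :
    #{p | countLT (fun i => y (e i)) (y (e p)) < k} = #{j | countLT y (y j) < k} :=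
  card_equiv e (by simp [countLT_comp_equiv])

lemma le_card_countLT_lt (y : Fin m → β) {k : ℕ} (hk : k ≤ m) :
    k ≤ #{j | countLT y (y j) < k} := by
  rw [← card_countLT_lt_comp_equiv y (Tuple.sort y)]
  calc k = #{p : Fin m | (p : ℕ) < k} := by rw [Fin.card_filter_val_lt, min_eq_right hk]
    _ ≤ _ := card_le_card fun p hp => mem_filter.2 ⟨mem_univ p,
          (((Tuple.monotone_sort y).countLT_le_iff _ p).2 le_rfl).trans_lt (mem_filter.1 hp).2⟩

lemma card_countLT_lt_of_injective {y : Fin m → β} (hy : Injective y) {k : ℕ} (hk : k ≤ m) :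
    #{j | countLT y (y j) < k} = k := by
  have hsort : StrictMono (y ∘ Tuple.sort y) :=
    (Tuple.monotone_sort y).strictMono_of_injective (hy.comp (Tuple.sort y).injective)
  rw [← card_countLT_lt_comp_equiv y (Tuple.sort y)]
  calc #{p | countLT (fun i => y (Tuple.sort y i)) (y (Tuple.sort y p)) < k}
      = #{p : Fin m | (p : ℕ) < k} := by
        congr 1
        ext p
        simp only [mem_filter, mem_univ, true_and]
        exact iff_of_eq (congrArg (· < k) (hsort.countLT_apply p))
    _ = k := by rw [Fin.card_filter_val_lt, min_eq_right hk]

end Rank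

lemma le_orderStat_iff {m : ℕ} (x : Fin m → ℝ) (t : ℝ) (p : Fin m) :
    t ≤ orderStat x p ↔ countLT x t ≤ p := by
  rw [← countLT_comp_equiv x (Tuple.sort x)]
  exact ((Tuple.monotone_sort x).countLT_le_iff t p).symm

lemma coe_le_Qhat_iff {n : ℕ} {α : ℝ} (hα0 : 0 ≤ α) (hα1 : α < 1) (y : Fin n → ℝ) (t : ℝ) :
    (t : EReal) ≤ Qhat n α y ↔ countLT y t < ⌈(1 - α) * (n + 1 : ℝ)⌉₊ := by
  have hk0 : 0 < ⌈(1 - α) * (n + 1 : ℝ)⌉₊ := Nat.ceil_pos.2 (by nlinarith)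
  have hkn : ⌈(1 - α) * (n + 1 : ℝ)⌉₊ ≤ n + 1 := Nat.ceil_le.2 (by push_cast; nlinarith)
  have hy := countLT_le_card y t
  rw [Fintype.card_fin] at hy
  unfold Qhat
  rw [Int.ceil_toNat]
  split_ifs with h
  · rw [EReal.coe_le_coe_iff, le_orderStat_iff]
    dsimp only
    omega
  · simp only [le_top, true_iff]
    omega

lemma setOf_coe_le_Qhat_eq {n : ℕ} {α : ℝ} (hα0 : 0 ≤ α) (hα1 : α < 1) :
    {x : Fin (n + 1) → ℝ | (x (Fin.last n) : EReal) ≤ Qhat n α (fun i => x i.castSucc)} =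
      {x | countLT x (x (Fin.last n)) < ⌈(1 - α) * (n + 1 : ℝ)⌉₊} := by
  ext x
  rw [Set.mem_ofPred_eq, coe_le_Qhat_iff hα0 hα1, countLT_castSucc_last]
  rfl

lemma one_sub_le_ceil_div (α : ℝ) (n : ℕ) :
    1 - α ≤ ⌈(1 - α) * (n + 1 : ℝ)⌉₊ / (n + 1 : ℝ) := by
  rw [le_div_iff₀ (by positivity)]
  exact Nat.le_ceil _

lemma ceil_div_le {α : ℝ} (hα1 : α ≤ 1) (n : ℕ) :
    ⌈(1 - α) * (n + 1 : ℝ)⌉₊ / (n + 1 : ℝ) ≤ 1 - α + 1 / (n + 1) := by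
  rw [div_le_iff₀ (by positivity), add_mul, one_div_mul_cancel (by positivity)]
  exact (Nat.ceil_lt_add_one (by nlinarith)).le

lemma measure_pi_countLT_lt_eq {ι β : Type*} [Fintype ι] [DecidableEq ι] [MeasurableSpace β]
    [LinearOrder β] (μ : Measure β) [SigmaFinite μ] (i j : ι) (k : ℕ) :
    Measure.pi (fun _ : ι => μ) {x | countLT x (x i) < k} =
      Measure.pi (fun _ : ι => μ) {x | countLT x (x j) < k} := by
  have hswap := measurePreserving_arrowCongr' (fun _ => μ) (fun _ => μ) (Equiv.swap i j)
    (MeasurableEquiv.refl β) fun _ => MeasurePreserving.id μ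
  rw [← hswap.measure_preimage_equiv]
  congr 1
  ext x
  simp [MeasurableEquiv.arrowCongr', Equiv.arrowCongr', Equiv.arrowCongr, Function.comp_def,
    countLT_comp_equiv]

lemma sum_measure_eq_lintegral_card {X ι : Type*} [MeasurableSpace X] [Fintype ι]
    (μ : Measure X) {p : ι → X → Prop} [∀ i, DecidablePred (p i)]
    (hp : ∀ i, MeasurableSet {x | p i x}) :
    ∑ i, μ {x | p i x} = ∫⁻ x, (#{i | p i x} : ℝ≥0∞) ∂μ := by
  have hcard : ∀ x, (#{i | p i x} : ℝ≥0∞) = ∑ i, {x | p i x}.indicator 1 x := fun x => by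
    simp only [card_filter, Nat.cast_sum, Nat.cast_ite, Nat.cast_one, Nat.cast_zero,
      Set.indicator_apply, Set.mem_ofPred_eq, Pi.one_apply]
  simp_rw [hcard]
  rw [lintegral_finsetSum _ fun i _ => measurable_one.indicator (hp i)]
  exact Finset.sum_congr rfl fun i _ => (lintegral_indicator_one (hp i)).symm

lemma ae_injective_of_measure_eq_zero {ι β : Type*} [Countable ι] [MeasurableSpace β]
    {ν : Measure (ι → β)} (h : ∀ i j, i ≠ j → ν {x | x i = x j} = 0) :
    ∀ᵐ x ∂ν, Injective x := by
  have hpair : ∀ i j, ∀ᵐ x ∂ν, x i = x j → i = j := fun i j => by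
    by_cases hij : i = j
    · exact .of_forall fun _ _ => hij
    · exact (measure_eq_zero_iff_ae_notMem.1 (h i j hij)).mono fun x hx hxij => absurd hxij hx
  filter_upwards [ae_all_iff.2 fun i => ae_all_iff.2 (hpair i)] with x hx i j using hx i j

section RankProbability

variable {β : Type*} [LinearOrder β] [TopologicalSpace β] [OrderClosedTopology β]
  [SecondCountableTopology β] [MeasurableSpace β] [OpensMeasurableSpace β]
  {m : ℕ} (μ : Measure β)

lemma measurableSet_countLT_lt {ι : Type*} [Fintype ι] (j : ι) (k : ℕ) :
    MeasurableSet {x : ι → β | countLT x (x j) < k} := by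
  have hcount : Measurable fun x : ι → β => countLT x (x j) := by
    simp_rw [countLT, card_filter]
    exact Finset.measurable_sum _ fun i _ => measurable_const.ite
      (measurableSet_lt (measurable_pi_apply i) (measurable_pi_apply j)) measurable_const
  exact hcount (MeasurableSet.of_discrete (s := Set.Iio k))

lemma card_mul_measure_pi_countLT_lt [SigmaFinite μ] (j : Fin m) (k : ℕ) :
    (m : ℝ≥0∞) * Measure.pi (fun _ : Fin m => μ) {x | countLT x (x j) < k} =
      ∫⁻ x : Fin m → β, (#{i | countLT x (x i) < k} : ℝ≥0∞) ∂Measure.pi (fun _ => μ) := by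
  rw [← sum_measure_eq_lintegral_card _ (p := fun i x => countLT x (x i) < k)
    fun i => measurableSet_countLT_lt i k]
  simp [measure_pi_countLT_lt_eq μ _ j]

lemma div_le_measureReal_pi_countLT_lt [IsProbabilityMeasure μ] (j : Fin m) {k : ℕ}
    (hk : k ≤ m) : (k : ℝ) / m ≤ (Measure.pi fun _ : Fin m => μ).real {x | countLT x (x j) < k} := by
  have hbound : (k : ℝ≥0∞) ≤ m * Measure.pi (fun _ : Fin m => μ) {x | countLT x (x j) < k} := by
    rw [card_mul_measure_pi_countLT_lt]
    calc (k : ℝ≥0∞) = ∫⁻ _, (k : ℝ≥0∞) ∂Measure.pi (fun _ => μ) := by simp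
      _ ≤ _ := lintegral_mono fun x => Nat.cast_le.2 (le_card_countLT_lt x hk)
  rw [div_le_iff₀' (by exact_mod_cast j.pos), measureReal_def]
  simpa [ENNReal.toReal_mul] using ENNReal.toReal_mono (by finiteness) hbound

lemma measureReal_pi_countLT_lt_of_ae_injective [IsProbabilityMeasure μ]
    (hinj : ∀ᵐ x ∂Measure.pi (fun _ : Fin m => μ), Injective x) (j : Fin m) {k : ℕ}
    (hk : k ≤ m) : (Measure.pi fun _ : Fin m => μ).real {x | countLT x (x j) < k} = k / m := by
  have hexact : (m : ℝ≥0∞) * Measure.pi (fun _ : Fin m => μ) {x | countLT x (x j) < k} = k := by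
    rw [card_mul_measure_pi_countLT_lt, lintegral_congr_ae
      (hinj.mono fun x hx => congrArg Nat.cast (card_countLT_lt_of_injective hx hk))]
    simp
  rw [eq_div_iff (by exact_mod_cast j.pos.ne'), mul_comm, measureReal_def]
  simpa [ENNReal.toReal_mul] using congrArg ENNReal.toReal hexact

end RankProbability

/-- Split conformal marginal coverage: `P[r_{n+1} ≤ Q̂] ≥ 1-α`, and if the scores are
almost surely distinct, also `P[r_{n+1} ≤ Q̂] ≤ 1-α+1/(n+1)`. -/
theorem split_conformal_marginal_coverage
    {Ω : Type*} [MeasurableSpace Ω] (P : Measure Ω) [IsProbabilityMeasure P]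
    (n : ℕ) (r : Fin (n + 1) → Ω → ℝ) (hr : ∀ i, Measurable (r i))
    (μ : Measure ℝ)
    (hindep : iIndepFun r P)
    (hid : ∀ i, Measure.map (r i) P = μ)
    (α : ℝ) (hα : α ∈ Set.Ioo (0:ℝ) 1) :
    1 - α ≤ (P {ω | (r (Fin.last n) ω : EReal)
        ≤ Qhat n α (fun i => r i.castSucc ω)}).toReal ∧
      ((∀ i j : Fin (n + 1), i ≠ j → P {ω | r i ω = r j ω} = 0) →
        (P {ω | (r (Fin.last n) ω : EReal)
            ≤ Qhat n α (fun i => r i.castSucc ω)}).toReal ≤ 1 - α + 1 / (n + 1)) := by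
  have hkn : ⌈(1 - α) * (n + 1 : ℝ)⌉₊ ≤ n + 1 := Nat.ceil_le.2 (by push_cast; nlinarith [hα.1])
  have : IsProbabilityMeasure μ := hid 0 ▸ Measure.isProbabilityMeasure_map (hr 0).aemeasurable
  have hR : Measurable fun ω i => r i ω := measurable_pi_lambda _ hr
  have hlaw : P.map (fun ω i => r i ω) = Measure.pi fun _ => μ := by
    simpa [hid] using hindep.map_fun_eq_pi_map fun i => (hr i).aemeasurable
  have hevent : P {ω | (r (Fin.last n) ω : EReal) ≤ Qhat n α (fun i => r i.castSucc ω)} =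
      Measure.pi (fun _ => μ) {x | countLT x (x (Fin.last n)) < ⌈(1 - α) * (n + 1 : ℝ)⌉₊} := by
    rw [← hlaw, Measure.map_apply hR (measurableSet_countLT_lt _ _),
      ← setOf_coe_le_Qhat_eq hα.1.le hα.2]
    rfl
  rw [hevent, ← measureReal_def]
  refine ⟨(one_sub_le_ceil_div α n).trans ?_, fun hdistinct => ?_⟩
  · exact_mod_cast div_le_measureReal_pi_countLT_lt μ (Fin.last n) hkn
  have hinj : ∀ᵐ x ∂Measure.pi (fun _ : Fin (n + 1) => μ), Injective x :=
    ae_injective_of_measure_eq_zero fun i j hij => by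
      rw [← hlaw, Measure.map_apply hR (measurableSet_eq_fun (measurable_pi_apply i)
        (measurable_pi_apply j))]
      exact hdistinct i j hij
  rw [measureReal_pi_countLT_lt_of_ae_injective μ hinj (Fin.last n) hkn]
  exact_mod_cast ceil_div_le hα.2.le n
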